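/- arXiv:1803.05245 — 4 statements merged into one kernel-verified Lean document; each statement's English description precedes it below -/
import Mathlib

section
/- The optimal classical average success probability of the standard d-dimensional random access code with n dits, using identity decoding and majority encoding, equals (1/(n d^n)) Σ [n!/(n_0!···n_{d-1}!)] · max{n_0,...,n_{d-1}}, where the sum is over all non-negative integer solutions of n_0+···+n_{d-1}=n. -/
/-!
Fixing Bob's decoder `D` amounts to fixing the codebook `G m = (D_y m)_y`, and Alice's best
reply sends a message whose codeword agrees with her string in as many positions as possible.
If a column `y₀` of the codebook misses a letter `c`, it repeats another one, and overwriting a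
repeated entry `G m y₀` by `c` does not lower the total best agreement: for each pair of strings
exchanged by swapping the letters `G m y₀` and `c` in position `y₀`, the sum of their best
agreements does not decrease. Repeating this makes every column a permutation, and such a
codebook is the identity codebook `G m = (m, …, m)` up to relabelling the letters in each
position. For the identity codebook the best agreement of a string is its largest letter count,
and there are `multinomial k` strings with letter counts `k`, as the multinomial theorem shows
when `(∑ c, X c) ^ n` is expanded in the monoid algebra of `α → ℕ`.
-/

/-- Average success probability of a deterministic strategy `(E, D)` in the
`d`-dimensional RAC with `n` dits. -/
noncomputable def racAvg (n d : ℕ) (E : (Fin n → Fin d) → Fin d)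
    (D : Fin n → Fin d → Fin d) : ℝ :=
  (∑ a : Fin n → Fin d, ∑ y : Fin n, if D y (E a) = a y then (1 : ℝ) else 0)
    / (n * d ^ n)

open Finset

theorem sum_filter_sum_val_eq_sum_piAntidiag {ι M : Type*} [Fintype ι] [DecidableEq ι]
    [AddCommMonoid M] (n : ℕ) (g : (ι → ℕ) → M) :
    ∑ f ∈ (univ : Finset (ι → Fin (n + 1))).filter (fun f => ∑ i, (f i : ℕ) = n),
      g (fun i => f i) = ∑ k ∈ piAntidiag univ n, g k := by
  have hle {k : ι → ℕ} (hk : k ∈ piAntidiag univ n) (i : ι) : k i < n + 1 :=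
    Nat.lt_succ_of_le <|
      (mem_piAntidiag.1 hk).1 ▸ single_le_sum (fun _ _ => Nat.zero_le _) (mem_univ i)
  refine sum_nbij' (fun f i => (f i : ℕ)) (fun k i => Fin.ofNat (n + 1) (k i))
    (fun f hf => ?_) (fun k hk => ?_) (fun f _ => ?_) (fun k hk => ?_) (fun _ _ => rfl)
  · simpa using hf
  · simp [Nat.mod_eq_of_lt (hle hk _), (mem_piAntidiag.1 hk).1]
  · simp
  · funext i
    simp [Nat.mod_eq_of_lt (hle hk i)]

namespace RAC

section Agree

variable {ι α : Type*} [Fintype ι] [DecidableEq α]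

def agree (u v : ι → α) : ℕ := #{y | u y = v y}

theorem agree_le_agree {u v u' v' : ι → α} (h : ∀ y, u y = v y → u' y = v' y) :
    agree u v ≤ agree u' v' :=
  card_le_card (monotone_filter_right _ fun y _ => h y)

theorem agree_congr {u v u' v' : ι → α} (h : ∀ y, u y = v y ↔ u' y = v' y) :
    agree u v = agree u' v' :=
  (agree_le_agree fun y => (h y).1).antisymm (agree_le_agree fun y => (h y).2)

variable [Fintype α]

def score (G : α → ι → α) (a : ι → α) : ℕ := univ.sup fun m => agree (G m) a

theorem agree_le_score (G : α → ι → α) (m : α) (a : ι → α) :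
    agree (G m) a ≤ score G a :=
  le_sup (f := fun m => agree (G m) a) (mem_univ m)

variable [DecidableEq ι]

def total (G : α → ι → α) : ℕ := ∑ a, score G a

theorem sum_agree_le_total (G : α → ι → α) (E : (ι → α) → α) :
    ∑ a, agree (G (E a)) a ≤ total G :=
  sum_le_sum fun a _ => agree_le_score G (E a) a

theorem exists_sum_agree_eq_total [Nonempty α] (G : α → ι → α) :
    ∃ E : (ι → α) → α, ∑ a, agree (G (E a)) a = total G := by
  choose E hE using fun a => exists_mem_eq_sup univ univ_nonempty fun m => agree (G m) a
  exact ⟨E, sum_congr rfl fun a _ => (hE a).2.symm⟩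

theorem total_eq_total_const_of_bijective (G : α → ι → α)
    (hG : ∀ y, Function.Bijective fun m => G m y) :
    total G = total (Function.const ι : α → ι → α) := by
  let σ : (ι → α) ≃ (ι → α) := Equiv.piCongrRight fun y => Equiv.ofBijective _ (hG y)
  have h_score (a : ι → α) : score G (σ a) = score (Function.const ι) a :=
    sup_congr rfl fun m _ => agree_congr fun y => (hG y).1.eq_iff
  rw [total, ← σ.sum_comp]
  exact sum_congr rfl fun a _ => h_score a

end Agree

section Redirect

variable {ι α : Type*} [Fintype ι] [DecidableEq ι] [Fintype α] [DecidableEq α]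

def redirect (G : α → ι → α) (m : α) (y₀ : ι) (c : α) : α → ι → α :=
  fun k y => if k = m ∧ y = y₀ then c else G k y

variable {G : α → ι → α} {m : α} {y₀ : ι} {c : α}

theorem score_add_score_le_redirect (hc : ∀ k, G k y₀ ≠ c) {a : ι → α}
    (ha : a y₀ = G m y₀) :
    score G a + score G (Function.update a y₀ c) ≤
      score (redirect G m y₀ c) a + score (redirect G m y₀ c) (Function.update a y₀ c) := by
  set b := Function.update a y₀ c
  set G' := redirect G m y₀ c
  have hB : score G b ≤ min (score G' a) (score G' b) := by
    refine Finset.sup_le fun k _ => le_min ((agree_le_agree fun y h => ?_).trans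
      (agree_le_score G' k a)) ((agree_le_agree fun y h => ?_).trans (agree_le_score G' k b))
    all_goals
      grind [redirect, Function.update_apply]
  have hA : score G a ≤ max (score G' a) (score G' b) := by
    refine Finset.sup_le fun k _ => ?_
    obtain rfl | hk := eq_or_ne k m
    · refine (agree_le_agree fun y h => ?_).trans
        ((agree_le_score G' k b).trans (le_max_right _ _))
      grind [redirect, Function.update_apply]
    · refine (agree_le_agree fun y h => ?_).trans
        ((agree_le_score G' k a).trans (le_max_left _ _))
      grind [redirect, Function.update_apply]
  omega

theorem score_redirect_of_ne {a : ι → α} (hv : a y₀ ≠ G m y₀) (hc : a y₀ ≠ c) :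
    score (redirect G m y₀ c) a = score G a :=
  sup_congr rfl fun k _ => agree_congr fun y => by grind [redirect]

theorem total_le_total_redirect (hc : ∀ k, G k y₀ ≠ c) :
    total G ≤ total (redirect G m y₀ c) := by
  let e (a : ι → α) : ι → α := Function.update a y₀ (Equiv.swap (G m y₀) c (a y₀))
  have he : Function.Involutive e := fun a => by simp [e]
  have h_pair (a : ι → α) : score G a + score G (e a) ≤
      score (redirect G m y₀ c) a + score (redirect G m y₀ c) (e a) := by
    by_cases hv : a y₀ = G m y₀
    · have hea : e a = Function.update a y₀ c := by simp [e, hv]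
      exact hea ▸ score_add_score_le_redirect hc hv
    by_cases hca : a y₀ = c
    · have h₀ : e a y₀ = G m y₀ := by simp [e, hca]
      have h₁ : Function.update (e a) y₀ c = a := by rw [← hca]; simp [e]
      have := score_add_score_le_redirect hc h₀
      rw [h₁] at this
      omega
    · have hea : e a = a := by simp [e, Equiv.swap_apply_of_ne_of_ne hv hca]
      rw [hea, score_redirect_of_ne hv hca]
  have h_sum := sum_le_sum fun a (_ : a ∈ univ) => h_pair a
  rw [sum_add_distrib, sum_add_distrib, he.bijective.sum_comp (score G),
    he.bijective.sum_comp (score (redirect G m y₀ c))] at h_sum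
  unfold total
  omega

def missing (G : α → ι → α) : Finset (ι × α) := {p | ∀ k, G k p.1 ≠ p.2}

omit [DecidableEq ι] in
theorem mem_missing {p : ι × α} : p ∈ missing G ↔ ∀ k, G k p.1 ≠ p.2 := mem_filter_univ p

omit [DecidableEq ι] in
theorem bijective_of_missing_eq_empty (h : missing G = ∅) (y : ι) :
    Function.Bijective fun k => G k y := by
  have hsurj : Function.Surjective fun k => G k y := fun c => by
    by_contra! h'
    simpa [h] using (mem_missing (p := (y, c))).2 h'
  exact ⟨Finite.injective_iff_surjective.2 hsurj, hsurj⟩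

theorem missing_redirect_ssubset {m' : α} (hne : m' ≠ m) (hdup : G m' y₀ = G m y₀)
    (hc : (y₀, c) ∈ missing G) : missing (redirect G m y₀ c) ⊂ missing G := by
  refine (ssubset_iff_of_subset fun p hp => ?_).2 ⟨(y₀, c), hc, ?_⟩
  · simp only [mem_missing, redirect] at hp ⊢
    grind
  · simp only [mem_missing, redirect, not_forall, not_not]
    exact ⟨m, by simp⟩

theorem total_le_total_const (G : α → ι → α) :
    total G ≤ total (Function.const ι : α → ι → α) := by
  obtain hG | ⟨⟨y₀, c⟩, hc⟩ := (missing G).eq_empty_or_nonempty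
  · exact (total_eq_total_const_of_bijective G (bijective_of_missing_eq_empty hG)).le
  have h_col : ¬ Function.Injective fun k => G k y₀ := fun hinj =>
    have ⟨k, hk⟩ := Finite.injective_iff_surjective.1 hinj c
    mem_missing.1 hc k hk
  obtain ⟨m', m, hdup, hne⟩ := Function.not_injective_iff.1 h_col
  have h_dec := card_lt_card (missing_redirect_ssubset hne hdup hc)
  exact (total_le_total_redirect (mem_missing.1 hc)).trans
    (total_le_total_const (redirect G m y₀ c))
termination_by #(missing G)

end Redirect

section Counting

variable {ι α : Type*} [Fintype ι] [DecidableEq ι] [Fintype α] [DecidableEq α]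

def counts (a : ι → α) (c : α) : ℕ := #{y | a y = c}

omit [DecidableEq ι] in
theorem counts_mem_piAntidiag (a : ι → α) : counts a ∈ piAntidiag univ (Fintype.card ι) :=
  mem_piAntidiag.2 ⟨(card_eq_sum_card_fiberwise fun y _ => mem_univ (a y)).symm, by simp⟩

open AddMonoidAlgebra in
theorem card_counts_eq_multinomial {k : α → ℕ} (hk : ∑ c, k c = Fintype.card ι) :
    #{a : ι → α | counts a = k} = Nat.multinomial univ k := by
  let X (c : α) : AddMonoidAlgebra ℕ (α → ℕ) := single (Pi.single c 1) 1
  have h_words : (∑ c, X c) ^ Fintype.card ι = ∑ a : ι → α, single (counts a) 1 := by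
    rw [← card_univ, ← prod_const, prod_univ_sum, Fintype.piFinset_univ]
    refine sum_congr rfl fun a _ => ?_
    rw [prod_single, prod_const_one]
    congr 1
    funext c
    simp [counts, Finset.sum_apply, Pi.single_apply, eq_comm]
  have h_multinomial : (∑ c, X c) ^ Fintype.card ι =
      ∑ k' ∈ piAntidiag univ (Fintype.card ι), single k' (Nat.multinomial univ k') := by
    rw [sum_pow_eq_sum_piAntidiag]
    refine sum_congr rfl fun k' _ => ?_
    simp only [X, single_pow, prod_single, one_pow, prod_const_one, natCast_def, single_mul_single,
      ← Pi.single_smul, smul_eq_mul, mul_one, zero_add, univ_sum_single, Nat.cast_id]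
  have h_coeff := congrArg (fun p => p.coeff k) (h_words.symm.trans h_multinomial)
  simp only [coeff_sum, coeff_single, Finsupp.finsetSum_apply, Finsupp.single_apply, sum_boole,
    Nat.cast_id] at h_coeff
  rw [h_coeff, sum_ite_eq']
  simp [hk]

omit [DecidableEq ι] in
theorem score_const (a : ι → α) : score (Function.const ι) a = univ.sup (counts a) :=
  sup_congr rfl fun _ _ => congrArg card (filter_congr fun _ _ => eq_comm)

theorem total_const_eq : total (Function.const ι : α → ι → α) =
    ∑ k ∈ piAntidiag (univ : Finset α) (Fintype.card ι),
      Nat.multinomial univ k * univ.sup k := by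
  rw [total, ← sum_fiberwise_of_maps_to fun a _ => counts_mem_piAntidiag a]
  refine sum_congr rfl fun k hk => ?_
  rw [sum_congr rfl fun a ha => by rw [score_const, (mem_filter.1 ha).2], sum_const, smul_eq_mul,
    card_counts_eq_multinomial (mem_piAntidiag.1 hk).1]

end Counting

end RAC

theorem racAvg_eq_sum_agree (n d : ℕ) (E : (Fin n → Fin d) → Fin d)
    (D : Fin n → Fin d → Fin d) :
    racAvg n d E D = (∑ a, RAC.agree (Function.swap D (E a)) a : ℕ) / (n * d ^ n) := by
  simp [racAvg, RAC.agree, Function.swap]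

open RAC in
theorem stmt_3_general (n d : ℕ) (hd : 0 < d) :
    IsGreatest {p : ℝ | ∃ (E : (Fin n → Fin d) → Fin d) (D : Fin n → Fin d → Fin d),
        p = racAvg n d E D}
      ((∑ f ∈ (Finset.univ : Finset (Fin d → Fin (n + 1))).filter
            (fun f => ∑ i, (f i : ℕ) = n),
          ((Nat.multinomial Finset.univ (fun i => (f i : ℕ)) *
            (Finset.univ.sup fun i => (f i : ℕ)) : ℕ) : ℝ)) / (n * d ^ n)) := by
  have := Fin.pos_iff_nonempty.1 hd
  let identity : Fin d → Fin n → Fin d := Function.const (Fin n)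
  have h_identity : (∑ f ∈ (univ : Finset (Fin d → Fin (n + 1))).filter
      (fun f => ∑ i, (f i : ℕ) = n), ((Nat.multinomial univ (fun i => (f i : ℕ)) *
        (univ.sup fun i => (f i : ℕ)) : ℕ) : ℝ)) = total identity := by
    rw [sum_filter_sum_val_eq_sum_piAntidiag n
        fun k => ((Nat.multinomial univ k * univ.sup k : ℕ) : ℝ),
      total_const_eq, Fintype.card_fin, Nat.cast_sum]
  rw [h_identity]
  refine ⟨?_, ?_⟩
  · obtain ⟨E, hE⟩ := exists_sum_agree_eq_total identity
    exact ⟨E, fun _ m => m, by rw [racAvg_eq_sum_agree, ← hE]; rfl⟩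
  · rintro _ ⟨E, D, rfl⟩
    rw [racAvg_eq_sum_agree]
    gcongr
    exact (sum_agree_le_total _ E).trans (total_le_total_const _)

/-- The optimal classical average success probability of the standard
`d`-dimensional RAC with `n` dits equals
`(1/(n dⁿ)) Σ [n!/(n₀!⋯n_{d-1}!)]·max{n₀,…,n_{d-1}}`,
summed over non-negative integer solutions of `n₀+⋯+n_{d-1} = n`. -/
theorem stmt_3 (n d : ℕ) (hn : 0 < n) (hd : 0 < d) :
    IsGreatest {p : ℝ | ∃ (E : (Fin n → Fin d) → Fin d) (D : Fin n → Fin d → Fin d),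
        p = racAvg n d E D}
      ((∑ f ∈ (Finset.univ : Finset (Fin d → Fin (n + 1))).filter
            (fun f => ∑ i, (f i : ℕ) = n),
          ((Nat.multinomial Finset.univ (fun i => (f i : ℕ)) *
            (Finset.univ.sup fun i => (f i : ℕ)) : ℕ) : ℝ)) / (n * d ^ n)) :=
  stmt_3_general n d hd
end

section
/- For n = 2, the optimal classical average success probability of the d-dimensional random access code equals 1/2 + 1/(2d). -/
/-!
For each input `a`, the decoder answers at most `n - 1` of the `n` questions correctly unless it
answers all of them; but the inputs on which it answers everything are recovered from their
message, so there are at most as many of them as messages. For `n = 2` and `d` messages this bounds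
the number of successes by `d ^ 2 + d`, which is attained by sending `a 0`.
-/

open Finset

/-- Divided by `card ι * card α ^ card ι`, this is the average success probability of the random
access code with encoder `E` and decoders `D`. -/
def racScore {ι α β : Type*} [Fintype ι] [DecidableEq ι] [Fintype α] [DecidableEq α]
    (E : (ι → α) → β) (D : ι → β → α) : ℝ :=
  ∑ a : ι → α, ∑ y : ι, if D y (E a) = a y then 1 else 0

section

variable {ι α β : Type*} [Fintype ι] [DecidableEq ι] [Fintype α] [DecidableEq α] [Fintype β]

theorem card_filter_forall_decode_le (E : (ι → α) → β) (D : ι → β → α) :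
    #{a | ∀ y, D y (E a) = a y} ≤ Fintype.card β := by
  refine card_le_card_of_injOn E (fun a _ => mem_coe.2 (mem_univ _)) ?_
  intro a ha b hb hab
  simp only [coe_filter, mem_univ, true_and, Set.mem_ofPred_eq] at ha hb
  funext y
  rw [← ha y, ← hb y, hab]

omit [Fintype α] [DecidableEq α] [Fintype β] in
theorem sum_ite_one_add_one_le (P : ι → Prop) [DecidablePred P] :
    ∑ y, (if P y then (1 : ℝ) else 0) + 1 ≤ Fintype.card ι + if ∀ y, P y then 1 else 0 := by
  by_cases hP : ∀ y, P y
  · simp [hP]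
  · obtain ⟨y₀, hy₀⟩ := not_forall.1 hP
    rw [if_neg hP, ← sum_erase_add _ _ (mem_univ y₀), if_neg hy₀, add_zero, add_zero]
    have hrest : ∑ y ∈ univ.erase y₀, (if P y then (1 : ℝ) else 0) ≤ #(univ.erase y₀) :=
      sum_le_card_nsmul _ _ 1 (fun _ _ => by split_ifs <;> norm_num) |>.trans (by simp)
    rw [card_erase_of_mem (mem_univ _), card_univ,
      Nat.cast_sub (Fintype.card_pos_iff.2 ⟨y₀⟩), Nat.cast_one] at hrest
    linarith

theorem racScore_le (E : (ι → α) → β) (D : ι → β → α) :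
    racScore E D ≤ (Fintype.card ι - 1 : ℝ) * Fintype.card α ^ Fintype.card ι + Fintype.card β := by
  have hsum := sum_le_sum fun a (_ : a ∈ univ) =>
    sum_ite_one_add_one_le fun y => D y (E a) = a y
  rw [sum_add_distrib, sum_add_distrib, sum_boole] at hsum
  have hcard := card_filter_forall_decode_le E D
  simp only [sum_const, card_univ, Fintype.card_fun, nsmul_eq_mul, mul_one] at hsum
  push_cast at hsum
  unfold racScore
  nlinarith [(Nat.cast_le (α := ℝ)).2 hcard]

end

theorem racScore_fin_two_eval_zero (α : Type*) [Fintype α] [DecidableEq α] :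
    racScore (fun a : Fin 2 → α => a 0) (fun _ => id) = Fintype.card α ^ 2 + Fintype.card α := by
  have hpair : racScore (fun a : Fin 2 → α => a 0) (fun _ => id)
      = ∑ p : α × α, (1 + if p.1 = p.2 then (1 : ℝ) else 0) := by
    refine Fintype.sum_equiv (piFinTwoEquiv fun _ => α) _ _ fun a => ?_
    rw [Fin.sum_univ_two]
    simp only [Fin.isValue, id_eq, ↓reduceIte, piFinTwoEquiv, Equiv.coe_fn_mk, add_right_inj]
    exact if_congr Iff.rfl rfl rfl
  rw [hpair, Fintype.sum_prod_type]
  simp [sum_add_distrib]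
  ring

/-- For `n = 2`, the optimal classical average success probability of the
`d`-dimensional RAC equals `1/2 + 1/(2d)`. -/
theorem stmt_4 (d : ℕ) (hd : 0 < d) :
    IsGreatest {p : ℝ | ∃ (E : (Fin 2 → Fin d) → Fin d) (D : Fin 2 → Fin d → Fin d),
        p = (∑ a : Fin 2 → Fin d, ∑ y : Fin 2, if D y (E a) = a y then (1 : ℝ) else 0)
              / (2 * d ^ 2)}
      (1 / 2 + 1 / (2 * (d : ℝ))) := by
  have hd' : (0 : ℝ) < d := Nat.cast_pos.2 hd
  have hoptimum : (1 / 2 + 1 / (2 * (d : ℝ))) = ((d : ℝ) ^ 2 + d) / (2 * d ^ 2) := by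
    field_simp
  rw [hoptimum]
  refine ⟨⟨fun a => a 0, fun _ => id, ?_⟩, ?_⟩
  · have hscore := racScore_fin_two_eval_zero (Fin d)
    rw [Fintype.card_fin] at hscore
    rw [← hscore]
    rfl
  · rintro p ⟨E, D, rfl⟩
    gcongr
    have hscore := racScore_le E D
    norm_num at hscore
    exact hscore
end

section
/- The difference between the quantum and classical average payoffs of the binary RAC for n = 2 equals (1/(T_YES + d - 1))·((T_YES+1)(√d - 1))/(2d), and this is strictly positive for all integers d ≥ 2 and T_YES > 0. -/
/-!
With `T_d = T + d - 1`, the payoff `(T + 1 + c (2d + T - 3)) / (2 c T_d)` equals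
`(T + 1) / (2 c T_d) + (2d + T - 3) / (2 T_d)`; the quantum and classical payoffs are the cases
`c = √d` and `c = d`, so their difference is `(T + 1) / (2 T_d) · (1/√d - 1/d)`, which is positive
because `√d < d` for `d > 1`.
-/

open Real

lemma quantum_sub_classical_payoff {T d : ℝ} (hd : 0 < d) (hTd : T + d - 1 ≠ 0) :
    (T + 1 + √d * (2 * d + T - 3)) / (2 * √d * (T + d - 1))
        - (T + 1 + d * (2 * d + T - 3)) / (2 * d * (T + d - 1))
      = (T + 1) * (√d - 1) / (2 * d * (T + d - 1)) := by
  obtain ⟨s, hs, rfl⟩ : ∃ s > 0, s ^ 2 = d := ⟨√d, sqrt_pos.2 hd, sq_sqrt hd.le⟩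
  rw [sqrt_sq hs.le]
  field_simp
  ring

lemma payoff_gap_pos {T d : ℝ} (hT : 0 < T) (hd : 1 < d) :
    0 < (T + 1) * (√d - 1) / (2 * d * (T + d - 1)) := by
  have hs : 0 < √d - 1 := sub_pos.2 ((lt_sqrt zero_le_one).2 (by rwa [one_pow]))
  exact div_pos (mul_pos (by linarith) hs) (mul_pos (by linarith) (by linarith))

/-- The difference between the quantum and classical average payoffs of the binary RAC
for `n = 2` equals `(T_YES+1)(√d - 1)/(2d(T_YES+d-1))` and is strictly positive. -/
theorem stmt_14 (d : ℕ) (hd : 2 ≤ d) (TYES : ℝ) (hT : 0 < TYES) :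
    (TYES + 1 + Real.sqrt d * (2 * (d : ℝ) + TYES - 3)) / (2 * Real.sqrt d * (TYES + (d : ℝ) - 1))
        - (TYES + 1 + (d : ℝ) * (2 * (d : ℝ) + TYES - 3)) / (2 * (d : ℝ) * (TYES + (d : ℝ) - 1))
      = (TYES + 1) * (Real.sqrt d - 1) / (2 * (d : ℝ) * (TYES + (d : ℝ) - 1)) ∧
    0 < (TYES + 1) * (Real.sqrt d - 1) / (2 * (d : ℝ) * (TYES + (d : ℝ) - 1)) := by
  have hd1 : (1 : ℝ) < d := by exact_mod_cast hd
  exact ⟨quantum_sub_classical_payoff (by linarith) (by linarith), payoff_gap_pos hT hd1⟩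
end

section
/- For any decoding functions D_y : {0,...,d-1} → {0,...,d-1} (y ∈ {0,...,n-1}) and any encoding E, there exist an encoding E' such that the identity-decoding strategy (E', id) achieves average success probability at least that of (E, D). -/
/-!
For a fixed decoding table `D`, the best encoding sends `a` to a message `m` maximising the
number of dits `y` with `D y m = a y`. Replacing a single decoder `D y₀` by the identity does not
lower the total of these maxima: fix the other dits of `a` and let `c m` count the agreements of
message `m` on them. Summing over the value `v` of the dit `a y₀`,
`∑ᵥ maxₘ ([D y₀ m = v] + c m) = d · max c + #(D y₀ '' argmax c)`,
and `D y₀ '' argmax c` is no larger than `argmax c`, the value for the identity. Replacing the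
decoders one at a time reaches identity decoding, whose best encoding is the majority vote.
-/

open Finset Function

namespace RandomAccessCode

section MaxPlusIndicator

variable {α β : Type*} [Fintype α]

theorem sup_ite_add_eq (c : α → ℕ) (P : α → Prop) [DecidablePred P] :
    (univ.sup fun m => (if P m then 1 else 0) + c m)
      = univ.sup c + if ∃ m, P m ∧ c m = univ.sup c then 1 else 0 := by
  apply le_antisymm
  · refine Finset.sup_le fun m _ => ?_
    have hm : c m ≤ univ.sup c := le_sup (mem_univ m)
    have hmax : P m → c m = univ.sup c → ∃ m, P m ∧ c m = univ.sup c :=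
      fun hPm hcm => ⟨m, hPm, hcm⟩
    split_ifs at hmax ⊢ <;> grind
  · split_ifs with h
    · obtain ⟨m, hPm, hcm⟩ := h
      calc univ.sup c + 1 = (if P m then 1 else 0) + c m := by rw [if_pos hPm, hcm, add_comm]
        _ ≤ _ := le_sup (f := fun m => (if P m then 1 else 0) + c m) (mem_univ m)
    · exact sup_mono_fun fun m _ => Nat.le_add_left _ _

theorem sum_sup_ite_add_eq [Fintype β] [DecidableEq β] (c : α → ℕ) (t : α → β) :
    ∑ v, (univ.sup fun m => (if t m = v then 1 else 0) + c m)
      = Fintype.card β * univ.sup c + #((univ.filter fun m => c m = univ.sup c).image t) := by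
  simp_rw [sup_ite_add_eq, sum_add_distrib, sum_const, card_univ, smul_eq_mul, ← card_filter]
  congr 2
  ext v
  simp [and_comm]

theorem sum_sup_ite_add_le [DecidableEq α] (c : α → ℕ) (t : α → α) :
    ∑ v, (univ.sup fun m => (if t m = v then 1 else 0) + c m)
      ≤ ∑ v, (univ.sup fun m => (if m = v then 1 else 0) + c m) := by
  rw [sum_sup_ite_add_eq c t, sum_sup_ite_add_eq c fun m : α => m, image_id']
  exact Nat.add_le_add_left card_image_le _

end MaxPlusIndicator

variable {ι α : Type*} [Fintype ι] [Fintype α] [DecidableEq α]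

def agreements (w a : ι → α) : ℕ :=
  ∑ y, if w y = a y then 1 else 0

def bestAgreements (D : ι → α → α) (a : ι → α) : ℕ :=
  univ.sup fun m => agreements (fun y => D y m) a

theorem exists_agreements_const_eq_bestAgreements_id [Nonempty α] (a : ι → α) :
    ∃ m, agreements (fun _ => m) a = bestAgreements (fun _ => id) a := by
  obtain ⟨m, -, hm⟩ := exists_mem_eq_sup univ univ_nonempty
    fun m => agreements (fun _ => m) a
  exact ⟨m, hm.symm⟩

variable [DecidableEq ι]

def optimalScore (D : ι → α → α) : ℕ :=
  ∑ a, bestAgreements D a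

theorem sum_agreements_le_optimalScore (E : (ι → α) → α) (D : ι → α → α) :
    ∑ a, agreements (fun y => D y (E a)) a ≤ optimalScore D :=
  sum_le_sum fun a _ => le_sup (f := fun m => agreements (fun y => D y m) a) (mem_univ (E a))

theorem optimalScore_le_update_id (D : ι → α → α) (y₀ : ι) :
    optimalScore D ≤ optimalScore (update D y₀ id) := by
  let e := Equiv.funSplitAt y₀ α
  have split (D : ι → α → α) : optimalScore D = ∑ r : {y // y ≠ y₀} → α, ∑ v,
      univ.sup fun m => (if D y₀ m = v then 1 else 0) +
        ∑ y : {y // y ≠ y₀}, if D y m = r y then 1 else 0 := by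
    rw [optimalScore, ← e.symm.sum_comp, Fintype.sum_prod_type, sum_comm]
    simp [e, bestAgreements, agreements, Fintype.sum_eq_add_sum_subtype_ne _ y₀,
      fun j : {j // j ≠ y₀} => j.2]
  rw [split D, split (update D y₀ id)]
  refine sum_le_sum fun r _ => ?_
  have hD (y : {y // y ≠ y₀}) : update D y₀ id y = D y := update_of_ne y.2 _ _
  simp only [update_self, id, hD]
  exact sum_sup_ite_add_le _ (D y₀)

theorem optimalScore_le_piecewise_id (D : ι → α → α) (s : Finset ι) :
    optimalScore D ≤ optimalScore (s.piecewise (fun _ => id) D) := by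
  induction s using Finset.induction_on with
  | empty => simp
  | insert y₀ s _ ih =>
    rw [piecewise_insert]
    exact ih.trans (optimalScore_le_update_id _ y₀)

theorem optimalScore_le_optimalScore_id (D : ι → α → α) :
    optimalScore D ≤ optimalScore (fun _ => id : ι → α → α) := by
  simpa using optimalScore_le_piecewise_id D univ

end RandomAccessCode

open RandomAccessCode in
theorem stmt_18_general (n d : ℕ)
    (E : (Fin n → Fin d) → Fin d) (D : Fin n → Fin d → Fin d) :
    ∃ E' : (Fin n → Fin d) → Fin d,
      (∑ a : Fin n → Fin d, ∑ y : Fin n, if D y (E a) = a y then (1 : ℝ) else 0)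
          / (n * d ^ n)
        ≤ (∑ a : Fin n → Fin d, ∑ y : Fin n, if E' a = a y then (1 : ℝ) else 0)
          / (n * d ^ n) := by
  choose E' hE' using fun a =>
    have : Nonempty (Fin d) := ⟨E a⟩
    exists_agreements_const_eq_bestAgreements_id a
  refine ⟨E', div_le_div_of_nonneg_right ?_ (by positivity)⟩
  have hcount : ∑ a, agreements (fun y => D y (E a)) a ≤ ∑ a, agreements (fun _ => E' a) a :=
    calc _ ≤ optimalScore D := sum_agreements_le_optimalScore E D
      _ ≤ optimalScore (fun _ => id) := optimalScore_le_optimalScore_id D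
      _ = _ := sum_congr rfl fun a _ => (hE' a).symm
  exact_mod_cast hcount

/-- For any strategy `(E, D)` of the `d`-dimensional RAC with `n` dits, there is an
encoding `E'` such that the identity-decoding strategy `(E', id)` achieves average
success probability at least that of `(E, D)`. -/
theorem stmt_18 (n d : ℕ) (hn : 0 < n) (hd : 0 < d)
    (E : (Fin n → Fin d) → Fin d) (D : Fin n → Fin d → Fin d) :
    ∃ E' : (Fin n → Fin d) → Fin d,
      (∑ a : Fin n → Fin d, ∑ y : Fin n, if D y (E a) = a y then (1 : ℝ) else 0)
          / (n * d ^ n)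
        ≤ (∑ a : Fin n → Fin d, ∑ y : Fin n, if E' a = a y then (1 : ℝ) else 0)
          / (n * d ^ n) :=
  stmt_18_general n d E D
end
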